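/- arXiv:2412.16436 — 2 statements merged into one kernel-verified Lean document; each statement's English description precedes it below -/
import Mathlib

section
/- Let α ∈ (1/2,1) and T > 0, and let f ∈ L^1((0,T];ℝ) satisfy either sup_{t∈(0,T]} t^{1−α}|f(t)| < ∞ or sup_{t∈(0,T]} |f(t)| < ∞. Then (V∘f)(t) ≥ 0 for all t ∈ (0,T], and there exists a constant C > 0 (depending on α, γ, ζ, b, c_ν, T and the L^1-norm of f on (0,T]) such that 0 ≤ ((V∘f) * K)(t) ≤ C · (|f|² * K)(t) for all t ∈ (0,T]. -/
/-!
Since `0 ≤ e^{-x} - 1 + x ≤ x² e^{|x|}` and, by Cauchy–Schwarz,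
`(∫_{(u-y)⁺}^u f)² ≤ y ∫_{(u-y)⁺}^u f²`, Tonelli in `y` gives
`(V∘f)(u) ≤ C₁ ∫_0^u f(r)² (u-r)^{-α} dr`. Convolving with `K` and using associativity of
convolution together with `∫_0^x s^{α-1} (x-s)^{-α} ds = B(α, 1-α)` bounds `((V∘f) * K)(t)` by
a multiple of `∫_0^t f²`. As `K` is decreasing, `(|f|² * K)(t) ≥ K(T) ∫_0^t f²`; the
regularity assumption on `f` (where `α > 1/2` enters) makes `|f|² K(t - ·)` integrable by another
Beta integral, so that this Bochner integral is not the junk value `0`.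
-/

open MeasureTheory Set

/-- Convolution on `(0,t)`: `(f * g)(t) = ∫_0^t f(t-s) g(s) ds`. -/
noncomputable def conv (f g : ℝ → ℝ) (t : ℝ) : ℝ := ∫ s in (0:ℝ)..t, f (t - s) * g s

/-- The nonlinear operator `V∘f` with Lévy measure `ν(dy) = cν y^{-(2+α)} dy`. -/
noncomputable def Vop (α ζ b cν : ℝ) (f : ℝ → ℝ) (t : ℝ) : ℝ :=
  ∫ y in Set.Ioi (0:ℝ),
    (Real.exp (-((ζ / b) * ∫ s in (max (t - y) 0)..t, f s)) - 1
      + (ζ / b) * ∫ s in (max (t - y) 0)..t, f s) * (cν * y ^ (-(2 + α)))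

/-- The fractional kernel `K(t) = γ t^{α-1} / Γ(α)`. -/
noncomputable def fracK (α γ : ℝ) (t : ℝ) : ℝ := γ * t ^ (α - 1) / Real.Gamma α

open scoped ENNReal
open ProbabilityTheory

lemma exp_neg_sub_one_add_nonneg (x : ℝ) : 0 ≤ Real.exp (-x) - 1 + x := by
  linarith [Real.add_one_le_exp (-x)]

lemma exp_neg_sub_one_add_le (x : ℝ) : Real.exp (-x) - 1 + x ≤ x ^ 2 * Real.exp |x| := by
  have h₁ := Real.add_one_le_exp x
  have h₂ := Real.add_one_le_exp (-x)
  have h₃ : Real.exp x * Real.exp (-x) = 1 := by rw [← Real.exp_add]; simp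
  rcases le_total 0 x with hx | hx
  · rw [abs_of_nonneg hx]
    nlinarith [Real.exp_pos (-x), Real.exp_pos x, mul_nonneg hx hx]
  · rw [abs_of_nonpos hx]
    nlinarith [Real.exp_pos (-x), Real.exp_pos x, mul_nonneg_of_nonpos_of_nonpos hx hx]

section

variable {X : Type*} [MeasurableSpace X] {μ : Measure X}

lemma lintegral_sq_le_measure_univ_mul {h : X → ℝ≥0∞} (hh : AEMeasurable h μ) :
    (∫⁻ x, h x ∂μ) ^ 2 ≤ μ univ * ∫⁻ x, h x ^ 2 ∂μ := by
  have key := ENNReal.lintegral_mul_le_Lp_mul_Lq μ Real.HolderConjugate.two_two hh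
    (aemeasurable_const (b := (1 : ℝ≥0∞)))
  simp only [Pi.mul_apply, mul_one, ENNReal.rpow_two, one_pow, lintegral_const, one_mul] at key
  calc (∫⁻ x, h x ∂μ) ^ 2 ≤ ((∫⁻ x, h x ^ 2 ∂μ) ^ (1 / 2 : ℝ) * μ univ ^ (1 / 2 : ℝ)) ^ 2 := by
        gcongr
    _ = μ univ * ∫⁻ x, h x ^ 2 ∂μ := by
        rw [mul_pow, ← ENNReal.rpow_two, ← ENNReal.rpow_two, ← ENNReal.rpow_mul,
          ← ENNReal.rpow_mul]
        norm_num [mul_comm]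

lemma ofReal_integral_le_lintegral_ofReal {f : X → ℝ} (hf : 0 ≤ᵐ[μ] f) :
    ENNReal.ofReal (∫ x, f x ∂μ) ≤ ∫⁻ x, ENNReal.ofReal (f x) ∂μ :=
  calc ENNReal.ofReal (∫ x, f x ∂μ) ≤ ‖∫ x, f x ∂μ‖ₑ := Real.ofReal_le_enorm _
    _ ≤ ∫⁻ x, ‖f x‖ₑ ∂μ := enorm_integral_le_lintegral_enorm f
    _ = ∫⁻ x, ENNReal.ofReal (f x) ∂μ :=
      lintegral_congr_ae (hf.mono fun _ hx => Real.enorm_of_nonneg hx)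

end

lemma ofReal_sq_eq_enorm_sq (x : ℝ) : ENNReal.ofReal (x ^ 2) = ‖x‖ₑ ^ 2 := by
  rw [← sq_abs, ENNReal.ofReal_pow (abs_nonneg _), Real.enorm_eq_ofReal_abs]

lemma ofReal_sq_intervalIntegral_le (f : ℝ → ℝ) {a b : ℝ} (hab : a ≤ b) :
    ENNReal.ofReal ((∫ x in a..b, f x) ^ 2) ≤
      ENNReal.ofReal (b - a) * ∫⁻ x in Ioc a b, ENNReal.ofReal (f x ^ 2) := by
  rw [intervalIntegral.integral_of_le hab]
  by_cases hf : IntegrableOn f (Ioc a b)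
  swap
  · simp [integral_undef hf]
  calc ENNReal.ofReal ((∫ x in Ioc a b, f x) ^ 2) = ‖∫ x in Ioc a b, f x‖ₑ ^ 2 :=
        ofReal_sq_eq_enorm_sq _
    _ ≤ (∫⁻ x in Ioc a b, ‖f x‖ₑ) ^ 2 := by gcongr; exact enorm_integral_le_lintegral_enorm f
    _ ≤ volume (Ioc a b) * ∫⁻ x in Ioc a b, ‖f x‖ₑ ^ 2 := by
        simpa using lintegral_sq_le_measure_univ_mul hf.1.enorm
    _ = ENNReal.ofReal (b - a) * ∫⁻ x in Ioc a b, ENNReal.ofReal (f x ^ 2) := by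
        simp only [Real.volume_Ioc, ofReal_sq_eq_enorm_sq]

noncomputable def powKernel (a : ℝ) : ℝ → ℝ≥0∞ :=
  (Ioi 0).indicator fun x => ENNReal.ofReal (x ^ (a - 1))

lemma measurable_powKernel (a : ℝ) : Measurable (powKernel a) :=
  Measurable.indicator (by fun_prop) measurableSet_Ioi

lemma powKernel_of_pos {a x : ℝ} (hx : 0 < x) : powKernel a x = ENNReal.ofReal (x ^ (a - 1)) :=
  indicator_of_mem hx _

lemma powKernel_of_nonpos {a x : ℝ} (hx : x ≤ 0) : powKernel a x = 0 :=
  indicator_of_notMem (not_lt.2 hx) _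

lemma lintegral_Ioo_zero_one_rpow_mul_rpow {a b : ℝ} (ha : 0 < a) (hb : 0 < b) :
    ∫⁻ s in Ioo 0 1, ENNReal.ofReal (s ^ (a - 1) * (1 - s) ^ (b - 1)) =
      ENNReal.ofReal (beta a b) := by
  have h := lintegral_betaPDF_eq_one ha hb
  simp_rw [lintegral_betaPDF, mul_assoc,
    ENNReal.ofReal_mul (one_div_nonneg.2 (beta_pos ha hb).le)] at h
  rw [lintegral_const_mul' _ _ ENNReal.ofReal_ne_top] at h
  rw [← mul_one (ENNReal.ofReal (beta a b)), ← h, ← mul_assoc, ← ENNReal.ofReal_mul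
    (beta_pos ha hb).le, mul_one_div_cancel (beta_pos ha hb).ne', ENNReal.ofReal_one, one_mul]

lemma lintegral_Ioo_rpow_mul_rpow {a b x : ℝ} (ha : 0 < a) (hb : 0 < b) (hx : 0 < x) :
    ∫⁻ y in Ioo 0 x, ENNReal.ofReal (y ^ (a - 1) * (x - y) ^ (b - 1)) =
      ENNReal.ofReal (beta a b) * ENNReal.ofReal (x ^ (a + b - 1)) := by
  have himage : (x * ·) '' Ioo 0 1 = Ioo 0 x := by
    simpa using image_mul_left_Ioo hx 0 1
  rw [← himage, lintegral_image_eq_lintegral_abs_deriv_mul measurableSet_Ioo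
    (fun s _ => (hasDerivAt_const_mul x).hasDerivWithinAt) (mul_right_injective₀ hx.ne').injOn,
    ← lintegral_Ioo_zero_one_rpow_mul_rpow ha hb, mul_comm,
    ← lintegral_const_mul' _ _ ENNReal.ofReal_ne_top]
  refine setLIntegral_congr_fun measurableSet_Ioo fun s ⟨hs₀, hs₁⟩ => ?_
  rw [← ENNReal.ofReal_mul (abs_nonneg x), ← ENNReal.ofReal_mul (by positivity)]
  congr 1
  rw [abs_of_pos hx, show x - x * s = x * (1 - s) by ring,
    Real.mul_rpow hx.le hs₀.le, Real.mul_rpow hx.le (by linarith),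
    show a + b - 1 = (a - 1) + (b - 1) + 1 by ring, Real.rpow_add hx, Real.rpow_add hx,
    Real.rpow_one]
  ring

lemma powKernel_lconvolution_powKernel {a b : ℝ} (ha : 0 < a) (hb : 0 < b) :
    powKernel a ⋆ₗ powKernel b = fun x => ENNReal.ofReal (beta a b) * powKernel (a + b) x := by
  ext x
  rw [lconvolution_def]
  rcases le_or_gt x 0 with hx | hx
  · rw [powKernel_of_nonpos hx, mul_zero, ← lintegral_zero]
    refine lintegral_congr fun y => ?_
    rcases le_or_gt y 0 with hy | hy
    · rw [powKernel_of_nonpos hy, zero_mul]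
    · rw [powKernel_of_nonpos (a := b) (x := -y + x) (by linarith), mul_zero]
  · rw [powKernel_of_pos hx, ← lintegral_Ioo_rpow_mul_rpow ha hb hx,
      ← lintegral_indicator measurableSet_Ioo]
    refine lintegral_congr fun y => ?_
    by_cases hy : y ∈ Ioo 0 x
    · rw [indicator_of_mem hy, powKernel_of_pos hy.1, powKernel_of_pos (by linarith [hy.2]),
        ← ENNReal.ofReal_mul (by have := hy.1; positivity), neg_add_eq_sub]
    · rw [indicator_of_notMem hy]
      rcases le_or_gt y 0 with hy₀ | hy₀
      · rw [powKernel_of_nonpos hy₀, zero_mul]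
      · rw [powKernel_of_nonpos (a := b) (by simp at hy; linarith [hy hy₀]), mul_zero]

lemma lconvolution_powKernel_one (g : ℝ → ℝ≥0∞) (t : ℝ) :
    (g ⋆ₗ powKernel 1) t = ∫⁻ r in Iio t, g r := by
  rw [lconvolution_def, ← lintegral_indicator measurableSet_Iio]
  refine lintegral_congr fun r => ?_
  by_cases hr : r < t
  · rw [powKernel_of_pos (by linarith), indicator_of_mem (show r ∈ Iio t from hr), sub_self,
      Real.rpow_zero, ENNReal.ofReal_one, mul_one]
  · rw [powKernel_of_nonpos (by linarith), indicator_of_notMem (show r ∉ Iio t from hr), mul_zero]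

lemma lintegral_Ioi_rpow_neg_one_sub {β c : ℝ} (hβ : 0 < β) (hc : 0 < c) :
    ∫⁻ y in Ioi c, ENNReal.ofReal (y ^ (-(1 + β))) =
      ENNReal.ofReal (1 / β) * powKernel (1 - β) c := by
  have hp : -(1 + β) < -1 := by linarith
  rw [← ofReal_integral_eq_lintegral_ofReal (integrableOn_Ioi_rpow_of_lt hp hc)
      (ae_restrict_of_forall_mem measurableSet_Ioi fun y hy => by
        have : 0 < y := hc.trans hy; positivity),
    integral_Ioi_rpow_of_lt hp hc, powKernel_of_pos hc, ← ENNReal.ofReal_mul (by positivity)]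
  congr 1
  rw [show -(1 + β) + 1 = -β by ring, show 1 - β - 1 = -β by ring, neg_div_neg_eq]
  ring

lemma lintegral_Ioi_rpow_mul_indicator_Ioo {β : ℝ} (hβ : 0 < β) (z : ℝ) :
    ∫⁻ y in Ioi 0, ENNReal.ofReal (y ^ (-(1 + β))) * (Ioo 0 y).indicator 1 z =
      ENNReal.ofReal (1 / β) * powKernel (1 - β) z := by
  rcases le_or_gt z 0 with hz | hz
  · rw [powKernel_of_nonpos hz, mul_zero, ← lintegral_zero]
    refine lintegral_congr fun y => ?_
    rw [indicator_of_notMem (fun h => (not_lt.2 hz) h.1), mul_zero]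
  · rw [← lintegral_Ioi_rpow_neg_one_sub hβ hz, ← inter_eq_left.2 (Ioi_subset_Ioi hz.le),
      ← setLIntegral_indicator measurableSet_Ioi]
    refine lintegral_congr fun y => ?_
    by_cases hzy : y ∈ Ioi z
    · rw [indicator_of_mem (show z ∈ Ioo 0 y from ⟨hz, hzy⟩), indicator_of_mem hzy,
        Pi.one_apply, mul_one]
    · rw [indicator_of_notMem (fun h => hzy h.2), indicator_of_notMem hzy, mul_zero]

/- With `Ioc (u - y) u` in place of `Ioo`, the `y`-slice at `r = u` would be all of `Ioi 0`, on
which `y ^ (-(1 + β))` is not integrable. -/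
lemma lintegral_Ioi_rpow_mul_lintegral_Ioo {β : ℝ} (hβ : 0 < β) {g : ℝ → ℝ≥0∞}
    (hg : AEMeasurable g) (u : ℝ) :
    ∫⁻ y in Ioi 0, ENNReal.ofReal (y ^ (-(1 + β))) * ∫⁻ r in Ioo (u - y) u, g r =
      ENNReal.ofReal (1 / β) * (g ⋆ₗ powKernel (1 - β)) u := by
  have hS : MeasurableSet {p : ℝ × ℝ | u - p.2 ∈ Ioo 0 p.1} :=
    show MeasurableSet ({p : ℝ × ℝ | 0 < u - p.2} ∩ {p | u - p.2 < p.1}) from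
      (measurableSet_lt (by fun_prop) (by fun_prop)).inter
        (measurableSet_lt (by fun_prop) (by fun_prop))
  have hslice : ∀ y r, (Ioo (u - y) u).indicator g r = g r * (Ioo 0 y).indicator 1 (u - r) := by
    intro y r
    by_cases h : r ∈ Ioo (u - y) u
    · rw [indicator_of_mem h, indicator_of_mem (show u - r ∈ Ioo 0 y from
        ⟨by linarith [h.2], by linarith [h.1]⟩), Pi.one_apply, mul_one]
    · rw [indicator_of_notMem h, indicator_of_notMem (show u - r ∉ Ioo 0 y from
        fun h' => h ⟨by linarith [h'.2], by linarith [h'.1]⟩), mul_zero]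
  calc ∫⁻ y in Ioi 0, ENNReal.ofReal (y ^ (-(1 + β))) * ∫⁻ r in Ioo (u - y) u, g r
      = ∫⁻ y in Ioi 0, ∫⁻ r, g r *
          (ENNReal.ofReal (y ^ (-(1 + β))) * (Ioo 0 y).indicator 1 (u - r)) := by
        refine lintegral_congr fun y => ?_
        rw [← lintegral_indicator measurableSet_Ioo,
          ← lintegral_const_mul'' _ (hg.indicator measurableSet_Ioo)]
        simp_rw [hslice, mul_left_comm]
    _ = ∫⁻ r, ∫⁻ y in Ioi 0, g r *
          (ENNReal.ofReal (y ^ (-(1 + β))) * (Ioo 0 y).indicator 1 (u - r)) :=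
        lintegral_lintegral_swap (hg.comp_snd.mul ((by fun_prop : Measurable fun p : ℝ × ℝ =>
          ENNReal.ofReal (p.1 ^ (-(1 + β)))).mul (measurable_one.indicator hS)).aemeasurable)
    _ = ENNReal.ofReal (1 / β) * (g ⋆ₗ powKernel (1 - β)) u := by
        rw [lconvolution_def, ← lintegral_const_mul' _ _ ENNReal.ofReal_ne_top]
        refine lintegral_congr fun r => ?_
        have hmeas : Measurable fun y : ℝ =>
            ENNReal.ofReal (y ^ (-(1 + β))) * (Ioo 0 y).indicator 1 (u - r) :=
          (by fun_prop : Measurable fun y : ℝ => ENNReal.ofReal (y ^ (-(1 + β)))).mul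
            ((measurable_one.indicator hS).comp measurable_prodMk_right)
        rw [lintegral_const_mul _ hmeas, lintegral_Ioi_rpow_mul_indicator_Ioo hβ, neg_add_eq_sub,
          mul_left_comm]

noncomputable def sqOnIoc (T : ℝ) (f : ℝ → ℝ) : ℝ → ℝ≥0∞ :=
  (Ioc 0 T).indicator fun r => ENNReal.ofReal (f r ^ 2)

lemma aemeasurable_sqOnIoc {T : ℝ} {f : ℝ → ℝ} (hf : IntegrableOn f (Ioc 0 T)) :
    AEMeasurable (sqOnIoc T f) :=
  (aemeasurable_indicator_iff measurableSet_Ioc).2 (hf.1.aemeasurable.pow_const 2).ennreal_ofReal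

lemma setLIntegral_Iio_sqOnIoc_le (T t : ℝ) (f : ℝ → ℝ) :
    ∫⁻ r in Iio t, sqOnIoc T f r ≤ ∫⁻ r in Ioo 0 t, ENNReal.ofReal (f r ^ 2) := by
  rw [sqOnIoc, setLIntegral_indicator measurableSet_Ioc]
  exact lintegral_mono_set fun r ⟨⟨hr₀, _⟩, hrt⟩ => ⟨hr₀, hrt⟩

lemma ofReal_sq_intervalIntegral_max_le (f : ℝ → ℝ) {T u y : ℝ} (hu : 0 ≤ u) (huT : u ≤ T)
    (hy : 0 < y) :
    ENNReal.ofReal ((∫ s in (max (u - y) 0)..u, f s) ^ 2) ≤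
      ENNReal.ofReal y * ∫⁻ r in Ioo (u - y) u, sqOnIoc T f r := by
  have hsub : Ioc (max (u - y) 0) u ⊆ Ioc 0 T :=
    Ioc_subset_Ioc (le_max_right _ _) huT
  calc ENNReal.ofReal ((∫ s in (max (u - y) 0)..u, f s) ^ 2)
      ≤ ENNReal.ofReal (u - max (u - y) 0) *
          ∫⁻ r in Ioc (max (u - y) 0) u, ENNReal.ofReal (f r ^ 2) :=
        ofReal_sq_intervalIntegral_le f (max_le (by linarith) hu)
    _ = ENNReal.ofReal (u - max (u - y) 0) * ∫⁻ r in Ioc (max (u - y) 0) u, sqOnIoc T f r := by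
        congr 1
        exact setLIntegral_congr_fun measurableSet_Ioc fun r hr => by
          rw [sqOnIoc, indicator_of_mem (hsub hr)]
    _ ≤ ENNReal.ofReal y * ∫⁻ r in Ioc (u - y) u, sqOnIoc T f r :=
        mul_le_mul' (ENNReal.ofReal_le_ofReal (by linarith [le_max_left (u - y) 0]))
          (lintegral_mono_set (Ioc_subset_Ioc_left (le_max_left _ _)))
    _ = ENNReal.ofReal y * ∫⁻ r in Ioo (u - y) u, sqOnIoc T f r := by
        rw [setLIntegral_congr Ioo_ae_eq_Ioc]

/-- `Vop α ζ b cν f t` is, by definition, `∫ y in Ioi 0, vopIntegrand α ζ b cν f t y`. -/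
noncomputable def vopIntegrand (α ζ b cν : ℝ) (f : ℝ → ℝ) (t y : ℝ) : ℝ :=
  (Real.exp (-((ζ / b) * ∫ s in (max (t - y) 0)..t, f s)) - 1
    + (ζ / b) * ∫ s in (max (t - y) 0)..t, f s) * (cν * y ^ (-(2 + α)))

lemma vopIntegrand_nonneg {α ζ b cν : ℝ} (hcν : 0 ≤ cν) (f : ℝ → ℝ) (t : ℝ) {y : ℝ}
    (hy : 0 < y) : 0 ≤ vopIntegrand α ζ b cν f t y :=
  mul_nonneg (exp_neg_sub_one_add_nonneg _) (by positivity)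

lemma Vop_nonneg {α ζ b cν : ℝ} (hcν : 0 ≤ cν) (f : ℝ → ℝ) (t : ℝ) : 0 ≤ Vop α ζ b cν f t :=
  setIntegral_nonneg measurableSet_Ioi fun _ hy => vopIntegrand_nonneg hcν f t hy

lemma abs_intervalIntegral_max_le {f : ℝ → ℝ} {T u y : ℝ} (hf : IntegrableOn f (Ioc 0 T))
    (hu : 0 ≤ u) (huT : u ≤ T) (hy : 0 < y) :
    |∫ s in (max (u - y) 0)..u, f s| ≤ ∫ x in Ioc 0 T, |f x| := by
  have hle : max (u - y) 0 ≤ u := max_le (by linarith) hu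
  calc |∫ s in (max (u - y) 0)..u, f s| ≤ ∫ s in (max (u - y) 0)..u, |f s| :=
        intervalIntegral.abs_integral_le_integral_abs hle
    _ = ∫ s in Ioc (max (u - y) 0) u, |f s| := intervalIntegral.integral_of_le hle
    _ ≤ ∫ x in Ioc 0 T, |f x| :=
        setIntegral_mono_set hf.abs (ae_of_all _ fun _ => abs_nonneg _)
          (Ioc_subset_Ioc (le_max_right _ _) huT).eventuallyLE

lemma ofReal_vopIntegrand_le {α ζ b cν T u y : ℝ} (hcν : 0 ≤ cν) (hu : 0 ≤ u) (huT : u ≤ T)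
    (hy : 0 < y) {f : ℝ → ℝ} (hf : IntegrableOn f (Ioc 0 T)) :
    ENNReal.ofReal (vopIntegrand α ζ b cν f u y) ≤
      ENNReal.ofReal (Real.exp (|ζ / b| * ∫ x in Ioc 0 T, |f x|) * (ζ / b) ^ 2 * cν) *
        (ENNReal.ofReal (y ^ (-(1 + α))) * ∫⁻ r in Ioo (u - y) u, sqOnIoc T f r) := by
  set A := |ζ / b| * ∫ x in Ioc 0 T, |f x|
  set I := ∫ s in (max (u - y) 0)..u, f s
  have hIA : |ζ / b * I| ≤ A := by
    rw [abs_mul]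
    exact mul_le_mul_of_nonneg_left (abs_intervalIntegral_max_le hf hu huT hy) (abs_nonneg _)
  have hyrpow : y * y ^ (-(2 + α)) = y ^ (-(1 + α)) := by
    rw [show -(1 + α) = -(2 + α) + 1 by ring, Real.rpow_add_one hy.ne']
    ring
  calc ENNReal.ofReal (vopIntegrand α ζ b cν f u y)
      ≤ ENNReal.ofReal ((ζ / b * I) ^ 2 * Real.exp A * (cν * y ^ (-(2 + α)))) := by
        refine ENNReal.ofReal_le_ofReal (mul_le_mul_of_nonneg_right ?_ (by positivity))
        calc Real.exp (-(ζ / b * I)) - 1 + ζ / b * I ≤ (ζ / b * I) ^ 2 * Real.exp |ζ / b * I| :=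
              exp_neg_sub_one_add_le _
          _ ≤ (ζ / b * I) ^ 2 * Real.exp A := by gcongr
    _ = ENNReal.ofReal (Real.exp A * (ζ / b) ^ 2 * cν) * ENNReal.ofReal (I ^ 2) *
          ENNReal.ofReal (y ^ (-(2 + α))) := by
        rw [← ENNReal.ofReal_mul (by positivity), ← ENNReal.ofReal_mul (by positivity)]
        ring_nf
    _ ≤ ENNReal.ofReal (Real.exp A * (ζ / b) ^ 2 * cν) *
          (ENNReal.ofReal y * ∫⁻ r in Ioo (u - y) u, sqOnIoc T f r) *
          ENNReal.ofReal (y ^ (-(2 + α))) := by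
        gcongr
        exact ofReal_sq_intervalIntegral_max_le f hu huT hy
    _ = _ := by
        rw [← hyrpow, ENNReal.ofReal_mul hy.le]
        ring

lemma ofReal_Vop_le {α ζ b cν T u : ℝ} (hα : 0 < α) (hcν : 0 ≤ cν) (hu : 0 ≤ u) (huT : u ≤ T)
    {f : ℝ → ℝ} (hf : IntegrableOn f (Ioc 0 T)) :
    ENNReal.ofReal (Vop α ζ b cν f u) ≤
      ENNReal.ofReal (Real.exp (|ζ / b| * ∫ x in Ioc 0 T, |f x|) * (ζ / b) ^ 2 * cν / α) *
        (sqOnIoc T f ⋆ₗ powKernel (1 - α)) u := by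
  set C := Real.exp (|ζ / b| * ∫ x in Ioc 0 T, |f x|) * (ζ / b) ^ 2 * cν
  calc ENNReal.ofReal (Vop α ζ b cν f u)
      ≤ ∫⁻ y in Ioi 0, ENNReal.ofReal (vopIntegrand α ζ b cν f u y) :=
        ofReal_integral_le_lintegral_ofReal (ae_restrict_of_forall_mem measurableSet_Ioi
          fun _ hy => vopIntegrand_nonneg hcν f u hy)
    _ ≤ ∫⁻ y in Ioi 0, ENNReal.ofReal C *
          (ENNReal.ofReal (y ^ (-(1 + α))) * ∫⁻ r in Ioo (u - y) u, sqOnIoc T f r) :=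
        setLIntegral_mono' measurableSet_Ioi fun _ hy => ofReal_vopIntegrand_le hcν hu huT hy hf
    _ = ENNReal.ofReal (C / α) * (sqOnIoc T f ⋆ₗ powKernel (1 - α)) u := by
        rw [lintegral_const_mul' _ _ ENNReal.ofReal_ne_top,
          lintegral_Ioi_rpow_mul_lintegral_Ioo hα (aemeasurable_sqOnIoc hf), ← mul_assoc,
          ← ENNReal.ofReal_mul (by positivity), mul_one_div]

lemma fracK_nonneg {α γ s : ℝ} (hα : 0 < α) (hγ : 0 ≤ γ) (hs : 0 ≤ s) : 0 ≤ fracK α γ s := by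
  have := Real.Gamma_pos_of_pos hα
  unfold fracK
  positivity

lemma fracK_le_fracK {α γ s s' : ℝ} (hα₀ : 0 < α) (hα₁ : α ≤ 1) (hγ : 0 ≤ γ) (hs : 0 < s)
    (hss' : s ≤ s') : fracK α γ s' ≤ fracK α γ s := by
  unfold fracK
  gcongr ?_ / _
  exact mul_le_mul_of_nonneg_left (Real.rpow_le_rpow_of_nonpos hs hss' (by linarith)) hγ

lemma ofReal_fracK {α γ s : ℝ} (hα : 0 < α) (hγ : 0 ≤ γ) (hs : 0 < s) :
    ENNReal.ofReal (fracK α γ s) = ENNReal.ofReal (γ / Real.Gamma α) * powKernel α s := by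
  rw [powKernel_of_pos hs, ← ENNReal.ofReal_mul (div_nonneg hγ (Real.Gamma_pos_of_pos hα).le),
    fracK]
  ring_nf

lemma measurable_fracK (α γ : ℝ) : Measurable (fracK α γ) := by
  unfold fracK
  fun_prop

lemma conv_eq_integral_Ioo (F G : ℝ → ℝ) {t : ℝ} (ht : 0 ≤ t) :
    conv F G t = ∫ r in Ioo 0 t, F r * G (t - r) := by
  have h := intervalIntegral.integral_comp_sub_left (fun r => F r * G (t - r)) t (a := 0) (b := t)
  simp only [sub_sub_cancel, sub_self, sub_zero] at h
  rw [conv, h, intervalIntegral.integral_of_le ht, integral_Ioc_eq_integral_Ioo]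

lemma conv_nonneg {F G : ℝ → ℝ} {t : ℝ} (ht : 0 ≤ t) (hF : ∀ r, 0 ≤ F r)
    (hG : ∀ s, 0 ≤ s → 0 ≤ G s) : 0 ≤ conv F G t :=
  intervalIntegral.integral_nonneg ht fun s hs => mul_nonneg (hF _) (hG s hs.1)

lemma setLIntegral_Ioo_mul_fracK_le {α γ t : ℝ} (hα : 0 < α) (hγ : 0 ≤ γ) {F : ℝ → ℝ}
    {Φ : ℝ → ℝ≥0∞} {c : ℝ≥0∞} (hc : c ≠ ⊤) (hF : ∀ r ∈ Ioo 0 t, 0 ≤ F r)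
    (hFΦ : ∀ r ∈ Ioo 0 t, ENNReal.ofReal (F r) ≤ c * Φ r) :
    ∫⁻ r in Ioo 0 t, ENNReal.ofReal (F r * fracK α γ (t - r)) ≤
      c * ENNReal.ofReal (γ / Real.Gamma α) * (Φ ⋆ₗ powKernel α) t := by
  calc ∫⁻ r in Ioo 0 t, ENNReal.ofReal (F r * fracK α γ (t - r))
      ≤ ∫⁻ r in Ioo 0 t, c * ENNReal.ofReal (γ / Real.Gamma α) * (Φ r * powKernel α (-r + t)) := by
        refine setLIntegral_mono' measurableSet_Ioo fun r hr => ?_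
        rw [ENNReal.ofReal_mul (hF r hr), ofReal_fracK hα hγ (by linarith [hr.2]), neg_add_eq_sub]
        calc ENNReal.ofReal (F r) * (ENNReal.ofReal (γ / Real.Gamma α) * powKernel α (t - r))
            ≤ c * Φ r * (ENNReal.ofReal (γ / Real.Gamma α) * powKernel α (t - r)) := by
              gcongr
              exact hFΦ r hr
          _ = _ := by ring
    _ ≤ c * ENNReal.ofReal (γ / Real.Gamma α) * (Φ ⋆ₗ powKernel α) t := by
        rw [lintegral_const_mul' _ _ (by finiteness), lconvolution_def]
        gcongr _ * ?_
        exact setLIntegral_le_lintegral _ _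

lemma ofReal_conv_Vop_fracK_le {α γ ζ b cν T t : ℝ} (hα : α ∈ Ioo 0 1) (hγ : 0 ≤ γ)
    (hcν : 0 ≤ cν) (ht : 0 ≤ t) (htT : t ≤ T) {f : ℝ → ℝ} (hf : IntegrableOn f (Ioc 0 T)) :
    ENNReal.ofReal (conv (Vop α ζ b cν f) (fracK α γ) t) ≤
      ENNReal.ofReal (Real.exp (|ζ / b| * ∫ x in Ioc 0 T, |f x|) * (ζ / b) ^ 2 * cν / α *
        (γ / Real.Gamma α) * beta (1 - α) α) * ∫⁻ r in Ioo 0 t, ENNReal.ofReal (f r ^ 2) := by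
  obtain ⟨hα₀, hα₁⟩ := hα
  set c := Real.exp (|ζ / b| * ∫ x in Ioc 0 T, |f x|) * (ζ / b) ^ 2 * cν / α
  have hassoc : ((sqOnIoc T f ⋆ₗ powKernel (1 - α)) ⋆ₗ powKernel α) t =
      ENNReal.ofReal (beta (1 - α) α) * ∫⁻ r in Iio t, sqOnIoc T f r := by
    rw [← lconvolution_assoc₀ (aemeasurable_sqOnIoc hf) (measurable_powKernel _).aemeasurable
      (measurable_powKernel _).aemeasurable, powKernel_lconvolution_powKernel (by linarith) hα₀,
      sub_add_cancel, ← lconvolution_powKernel_one, lconvolution_def, lconvolution_def,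
      ← lintegral_const_mul' _ _ ENNReal.ofReal_ne_top]
    simp_rw [mul_left_comm (sqOnIoc T f _)]
  calc ENNReal.ofReal (conv (Vop α ζ b cν f) (fracK α γ) t)
      ≤ ∫⁻ r in Ioo 0 t, ENNReal.ofReal (Vop α ζ b cν f r * fracK α γ (t - r)) := by
        rw [conv_eq_integral_Ioo _ _ ht]
        exact ofReal_integral_le_lintegral_ofReal (ae_restrict_of_forall_mem measurableSet_Ioo
          fun r hr => mul_nonneg (Vop_nonneg hcν f r) (fracK_nonneg hα₀ hγ (by linarith [hr.2])))
    _ ≤ ENNReal.ofReal c * ENNReal.ofReal (γ / Real.Gamma α) *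
          ((sqOnIoc T f ⋆ₗ powKernel (1 - α)) ⋆ₗ powKernel α) t :=
        setLIntegral_Ioo_mul_fracK_le hα₀ hγ ENNReal.ofReal_ne_top
          (fun r _ => Vop_nonneg hcν f r)
          fun r hr => ofReal_Vop_le hα₀ hcν hr.1.le (by linarith [hr.2]) hf
    _ ≤ _ := by
        rw [hassoc, ← mul_assoc, ← ENNReal.ofReal_mul (by positivity),
          ← ENNReal.ofReal_mul (by positivity)]
        gcongr _ * ?_
        exact setLIntegral_Iio_sqOnIoc_le T t f

lemma exists_sq_le_mul_rpow {α T : ℝ} {f : ℝ → ℝ} (hα : 1 / 2 < α)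
    (hreg : (∃ M, ∀ t ∈ Ioc (0 : ℝ) T, t ^ (1 - α) * |f t| ≤ M) ∨
      (∃ M, ∀ t ∈ Ioc (0 : ℝ) T, |f t| ≤ M)) :
    ∃ M a : ℝ, 0 < a ∧ ∀ x ∈ Ioc 0 T, f x ^ 2 ≤ M * x ^ (a - 1) := by
  rcases hreg with ⟨M, hM⟩ | ⟨M, hM⟩
  · refine ⟨M ^ 2, 2 * α - 1, by linarith, fun x hx => ?_⟩
    have hx₀ : 0 < x := hx.1
    calc f x ^ 2 = (x ^ (1 - α) * |f x|) ^ 2 * x ^ (2 * α - 1 - 1) := by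
          rw [mul_pow, sq_abs, ← Real.rpow_mul_natCast hx₀.le, mul_right_comm, ← Real.rpow_add hx₀]
          ring_nf
          rw [Real.rpow_zero, mul_one]
      _ ≤ M ^ 2 * x ^ (2 * α - 1 - 1) := by
          gcongr
          exact hM x hx
  · refine ⟨M ^ 2, 1, one_pos, fun x hx => ?_⟩
    rw [sub_self, Real.rpow_zero, mul_one, ← sq_abs]
    exact pow_le_pow_left₀ (abs_nonneg _) (hM x hx) 2

lemma integrableOn_sq_mul_fracK {α γ T t M a : ℝ} (hα : 0 < α) (hγ : 0 ≤ γ) (ha : 0 < a)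
    (ht : 0 < t) (htT : t ≤ T) {f : ℝ → ℝ} (hf : IntegrableOn f (Ioc 0 T))
    (hM : ∀ x ∈ Ioc 0 T, f x ^ 2 ≤ M * x ^ (a - 1)) :
    IntegrableOn (fun r => |f r| ^ 2 * fracK α γ (t - r)) (Ioo 0 t) := by
  refine ⟨((hf.1.mono_set (Ioo_subset_Ioc_self.trans (Ioc_subset_Ioc_right htT))).norm.pow 2).mul
    ((measurable_fracK α γ).comp (measurable_const.sub measurable_id)).aestronglyMeasurable, ?_⟩
  calc ∫⁻ r in Ioo 0 t, ‖|f r| ^ 2 * fracK α γ (t - r)‖ₑ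
      = ∫⁻ r in Ioo 0 t, ENNReal.ofReal (|f r| ^ 2 * fracK α γ (t - r)) :=
        setLIntegral_congr_fun measurableSet_Ioo fun r hr => Real.enorm_of_nonneg
          (mul_nonneg (sq_nonneg _) (fracK_nonneg hα hγ (by linarith [hr.2])))
    _ ≤ ENNReal.ofReal M * ENNReal.ofReal (γ / Real.Gamma α) * (powKernel a ⋆ₗ powKernel α) t :=
        setLIntegral_Ioo_mul_fracK_le hα hγ ENNReal.ofReal_ne_top (fun _ _ => sq_nonneg _)
          fun r hr => by
            rw [sq_abs, powKernel_of_pos hr.1, ← ENNReal.ofReal_mul' (by have := hr.1; positivity)]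
            exact ENNReal.ofReal_le_ofReal (hM r ⟨hr.1, by linarith [hr.2]⟩)
    _ < ⊤ := by
        simp only [powKernel_lconvolution_powKernel ha hα, powKernel_of_pos ht]
        finiteness

lemma ofReal_mul_lintegral_le_conv_sq_fracK {α γ T t : ℝ} (hα : α ∈ Ioo 0 1) (hγ : 0 ≤ γ)
    (ht : 0 < t) (htT : t ≤ T) {f : ℝ → ℝ}
    (hint : IntegrableOn (fun r => |f r| ^ 2 * fracK α γ (t - r)) (Ioo 0 t)) :
    ENNReal.ofReal (fracK α γ T) * ∫⁻ r in Ioo 0 t, ENNReal.ofReal (f r ^ 2) ≤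
      ENNReal.ofReal (conv (fun s => |f s| ^ 2) (fracK α γ) t) := by
  rw [conv_eq_integral_Ioo _ _ ht.le, ofReal_integral_eq_lintegral_ofReal hint
    (ae_restrict_of_forall_mem measurableSet_Ioo fun r hr =>
      mul_nonneg (sq_nonneg _) (fracK_nonneg hα.1 hγ (by linarith [hr.2]))),
    ← lintegral_const_mul' _ _ ENNReal.ofReal_ne_top]
  refine setLIntegral_mono' measurableSet_Ioo fun r hr => ?_
  rw [← ENNReal.ofReal_mul (fracK_nonneg hα.1 hγ (by linarith)), mul_comm, sq_abs]
  gcongr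
  exact fracK_le_fracK hα.1 hα.2.le hγ (by linarith [hr.2]) (by linarith [hr.1])

theorem stmt_4 (α γ ζ b cν T : ℝ) (hα : α ∈ Set.Ioo (1/2 : ℝ) 1)
    (hγ : 0 < γ) (hζ : 0 < ζ) (hb : 0 < b) (hcν : 0 < cν) (hT : 0 < T)
    (f : ℝ → ℝ) (hf : IntegrableOn f (Set.Ioc 0 T))
    (hreg : (∃ M, ∀ t ∈ Set.Ioc (0:ℝ) T, t ^ (1 - α) * |f t| ≤ M) ∨
            (∃ M, ∀ t ∈ Set.Ioc (0:ℝ) T, |f t| ≤ M)) :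
    (∀ t ∈ Set.Ioc (0:ℝ) T, 0 ≤ Vop α ζ b cν f t) ∧
    ∃ C > (0:ℝ), ∀ t ∈ Set.Ioc (0:ℝ) T,
      0 ≤ conv (Vop α ζ b cν f) (fracK α γ) t ∧
      conv (Vop α ζ b cν f) (fracK α γ) t ≤
        C * conv (fun s => |f s| ^ 2) (fracK α γ) t := by
  have hα₀ : 0 < α := by linarith [hα.1]
  have hΓ := Real.Gamma_pos_of_pos hα₀
  have hKT : 0 < fracK α γ T := by unfold fracK; positivity
  obtain ⟨M, a, ha, hM⟩ := exists_sq_le_mul_rpow hα.1 hreg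
  set c := Real.exp (|ζ / b| * ∫ x in Ioc 0 T, |f x|) * (ζ / b) ^ 2 * cν / α *
    (γ / Real.Gamma α) * beta (1 - α) α
  have hc : 0 < c := by have := beta_pos (sub_pos.2 hα.2) hα₀; positivity
  refine ⟨fun t _ => Vop_nonneg hcν.le f t, c / fracK α γ T, div_pos hc hKT, fun t ht =>
    ⟨conv_nonneg ht.1.le (Vop_nonneg hcν.le f) fun s => fracK_nonneg hα₀ hγ.le, ?_⟩⟩
  have hsq : 0 ≤ conv (fun s => |f s| ^ 2) (fracK α γ) t :=
    conv_nonneg ht.1.le (fun _ => sq_nonneg _) fun s => fracK_nonneg hα₀ hγ.le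
  rw [← ENNReal.ofReal_le_ofReal_iff (by positivity), ENNReal.ofReal_mul (by positivity)]
  calc ENNReal.ofReal (conv (Vop α ζ b cν f) (fracK α γ) t)
      ≤ ENNReal.ofReal c * ∫⁻ r in Ioo 0 t, ENNReal.ofReal (f r ^ 2) :=
        ofReal_conv_Vop_fracK_le ⟨hα₀, hα.2⟩ hγ.le hcν.le ht.1.le ht.2 hf
    _ = ENNReal.ofReal (c / fracK α γ T) *
          (ENNReal.ofReal (fracK α γ T) * ∫⁻ r in Ioo 0 t, ENNReal.ofReal (f r ^ 2)) := by
        rw [← mul_assoc, ← ENNReal.ofReal_mul (by positivity), div_mul_cancel₀ _ hKT.ne']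
    _ ≤ _ := by
        gcongr _ * ?_
        exact ofReal_mul_lintegral_le_conv_sq_fracK ⟨hα₀, hα.2⟩ hγ.le ht.1 ht.2
          (integrableOn_sq_mul_fracK hα₀ hγ.le ha ht.1 ht.2 hf hM)
end

section
/- Let α ∈ (1/2,1) and let f : (0,∞) → ℝ be differentiable with |f(s)| ≤ C s^{α−1} and |f′(s)| ≤ C s^{α−2} for all s > 0 and some constant C > 0. Then there exists a constant C′ > 0, depending only on α and C, such that for every h > 0: (a) ∫_0^h |f(s)|² ds ≤ C′ h^{2α−1}; (b) |f(h+s) − f(s)| ≤ C′ · min( s^{α−1}, h · s^{α−2} ) for every s > 0; and (c) ∫_0^∞ |f(h+s) − f(s)|² ds ≤ C′ h^{2α−1}. -/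
/-!
By the size bound, the increment `f (h + s) - f s` is at most `2 C s^(α-1)`, and by the mean value
theorem at most `C h s^(α-2)`. Squaring, the first bound is integrable near `0` because `2α - 2 > -1`,
the second at infinity because `2α - 4 < -1`; using the first on `(0, h]` and the second on
`(h, ∞)` gives two integrals of order `h^(2α-1)`. The same computation with `|f|` bounds (a).
-/

open MeasureTheory Set

lemma sq_abs_le_sq_mul_rpow {x K s β : ℝ} (hs : 0 ≤ s) (hx : |x| ≤ K * s ^ β) :
    |x| ^ 2 ≤ K ^ 2 * s ^ (2 * β) := by
  calc |x| ^ 2 ≤ (K * s ^ β) ^ 2 := pow_le_pow_left₀ (abs_nonneg x) hx 2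
    _ = K ^ 2 * s ^ (2 * β) := by
      rw [mul_pow, ← Real.rpow_mul_natCast hs, mul_comm β]
      norm_num

section Increment

variable {f f' : ℝ → ℝ} {C β h s : ℝ}

lemma abs_add_sub_le_two_mul_rpow (hC : 0 ≤ C) (hβ : β ≤ 0) (hf : ∀ s > 0, |f s| ≤ C * s ^ β)
    (hh : 0 ≤ h) (hs : 0 < s) : |f (h + s) - f s| ≤ 2 * C * s ^ β := by
  have hhs : (h + s) ^ β ≤ s ^ β := Real.rpow_le_rpow_of_nonpos hs (by linarith) hβ
  calc |f (h + s) - f s| ≤ |f (h + s)| + |f s| := abs_sub _ _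
    _ ≤ C * (h + s) ^ β + C * s ^ β := add_le_add (hf _ (by linarith)) (hf s hs)
    _ ≤ C * s ^ β + C * s ^ β := by gcongr
    _ = 2 * C * s ^ β := by ring

lemma abs_add_sub_le_mul_rpow_of_hasDerivAt (hC : 0 ≤ C) (hβ : β ≤ 0)
    (hderiv : ∀ s > 0, HasDerivAt f (f' s) s) (hf' : ∀ s > 0, |f' s| ≤ C * s ^ β)
    (hh : 0 ≤ h) (hs : 0 < s) : |f (h + s) - f s| ≤ C * h * s ^ β := by
  have hbound : ∀ t ∈ Ici s, ‖f' t‖ ≤ C * s ^ β := fun t ht => by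
    have ht0 : 0 < t := hs.trans_le ht
    calc ‖f' t‖ ≤ C * t ^ β := hf' t ht0
      _ ≤ C * s ^ β := mul_le_mul_of_nonneg_left (Real.rpow_le_rpow_of_nonpos hs ht hβ) hC
  have hmvt := (convex_Ici s).norm_image_sub_le_of_norm_hasDerivWithin_le
    (fun t ht => (hderiv t (hs.trans_le ht)).hasDerivWithinAt) hbound
    self_mem_Ici (show h + s ∈ Ici s by simp [hh])
  rw [Real.norm_eq_abs, Real.norm_eq_abs, add_sub_cancel_right, abs_of_nonneg hh] at hmvt
  linarith

lemma abs_add_sub_le_two_mul_min (hC : 0 ≤ C) (hβ : β ≤ 1)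
    (hderiv : ∀ s > 0, HasDerivAt f (f' s) s) (hf : ∀ s > 0, |f s| ≤ C * s ^ (β - 1))
    (hf' : ∀ s > 0, |f' s| ≤ C * s ^ (β - 2)) (hh : 0 ≤ h) (hs : 0 < s) :
    |f (h + s) - f s| ≤ 2 * C * min (s ^ (β - 1)) (h * s ^ (β - 2)) := by
  rw [mul_min_of_nonneg _ _ (by positivity)]
  refine le_min (abs_add_sub_le_two_mul_rpow hC (by linarith) hf hh hs) ?_
  calc |f (h + s) - f s| ≤ C * h * s ^ (β - 2) :=
        abs_add_sub_le_mul_rpow_of_hasDerivAt hC (by linarith) hderiv hf' hh hs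
    _ ≤ 2 * C * (h * s ^ (β - 2)) := by
      have : 0 ≤ C * h * s ^ (β - 2) := by positivity
      linarith

end Increment

section RpowMajorant

variable {g : ℝ → ℝ} {K p h : ℝ}

lemma integrableOn_Ioc_zero_of_le_rpow (hp : -1 < p) (hh : 0 ≤ h)
    (hg : ContinuousOn g (Ioc 0 h)) (hg0 : ∀ s ∈ Ioc 0 h, 0 ≤ g s)
    (hle : ∀ s ∈ Ioc 0 h, g s ≤ K * s ^ p) : IntegrableOn g (Ioc 0 h) := by
  refine Integrable.mono' (((intervalIntegrable_iff_integrableOn_Ioc_of_le hh).mp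
    (intervalIntegral.intervalIntegrable_rpow' hp)).const_mul K)
    (hg.aestronglyMeasurable measurableSet_Ioc) ?_
  refine (ae_restrict_iff' measurableSet_Ioc).mpr (ae_of_all _ fun s hs => ?_)
  rw [Real.norm_eq_abs, abs_of_nonneg (hg0 s hs)]
  exact hle s hs

lemma setIntegral_Ioc_zero_le_of_le_rpow (hp : -1 < p) (hh : 0 ≤ h)
    (hg0 : ∀ s ∈ Ioc 0 h, 0 ≤ g s) (hle : ∀ s ∈ Ioc 0 h, g s ≤ K * s ^ p) :
    ∫ s in Ioc 0 h, g s ≤ K * (h ^ (p + 1) / (p + 1)) := by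
  calc ∫ s in Ioc 0 h, g s ≤ ∫ s in Ioc 0 h, K * s ^ p :=
        integral_mono_of_nonneg ((ae_restrict_iff' measurableSet_Ioc).mpr (ae_of_all _ hg0))
          (((intervalIntegrable_iff_integrableOn_Ioc_of_le hh).mp
            (intervalIntegral.intervalIntegrable_rpow' hp)).const_mul K)
          ((ae_restrict_iff' measurableSet_Ioc).mpr (ae_of_all _ hle))
    _ = K * (h ^ (p + 1) / (p + 1)) := by
      rw [integral_const_mul, ← intervalIntegral.integral_of_le hh, integral_rpow (Or.inl hp),
        Real.zero_rpow (by linarith), sub_zero]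

lemma integrableOn_Ioi_of_le_rpow (hp : p < -1) (hh : 0 < h)
    (hg : ContinuousOn g (Ioi h)) (hg0 : ∀ s ∈ Ioi h, 0 ≤ g s)
    (hle : ∀ s ∈ Ioi h, g s ≤ K * s ^ p) : IntegrableOn g (Ioi h) := by
  refine Integrable.mono' ((integrableOn_Ioi_rpow_of_lt hp hh).const_mul K)
    (hg.aestronglyMeasurable measurableSet_Ioi) ?_
  refine (ae_restrict_iff' measurableSet_Ioi).mpr (ae_of_all _ fun s hs => ?_)
  rw [Real.norm_eq_abs, abs_of_nonneg (hg0 s hs)]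
  exact hle s hs

lemma setIntegral_Ioi_le_of_le_rpow (hp : p < -1) (hh : 0 < h)
    (hg0 : ∀ s ∈ Ioi h, 0 ≤ g s) (hle : ∀ s ∈ Ioi h, g s ≤ K * s ^ p) :
    ∫ s in Ioi h, g s ≤ K * (-h ^ (p + 1) / (p + 1)) := by
  calc ∫ s in Ioi h, g s ≤ ∫ s in Ioi h, K * s ^ p :=
        integral_mono_of_nonneg ((ae_restrict_iff' measurableSet_Ioi).mpr (ae_of_all _ hg0))
          ((integrableOn_Ioi_rpow_of_lt hp hh).const_mul K)
          ((ae_restrict_iff' measurableSet_Ioi).mpr (ae_of_all _ hle))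
    _ = K * (-h ^ (p + 1) / (p + 1)) := by rw [integral_const_mul, integral_Ioi_rpow_of_lt hp hh]

end RpowMajorant

section SquareIntegrals

variable {α K h : ℝ}

lemma integral_sq_abs_le_of_abs_le_rpow {f : ℝ → ℝ} (hα : 1 / 2 < α) (hh : 0 ≤ h)
    (hf : ∀ s > 0, |f s| ≤ K * s ^ (α - 1)) :
    ∫ s in (0 : ℝ)..h, |f s| ^ 2 ≤ K ^ 2 / (2 * α - 1) * h ^ (2 * α - 1) := by
  rw [intervalIntegral.integral_of_le hh]
  calc ∫ s in Ioc 0 h, |f s| ^ 2 ≤ K ^ 2 * (h ^ (2 * (α - 1) + 1) / (2 * (α - 1) + 1)) :=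
        setIntegral_Ioc_zero_le_of_le_rpow (by linarith) hh (fun s _ => by positivity)
          fun s hs => sq_abs_le_sq_mul_rpow hs.1.le (hf s hs.1)
    _ = K ^ 2 / (2 * α - 1) * h ^ (2 * α - 1) := by ring_nf

lemma integral_sq_abs_le_of_abs_le_min {g : ℝ → ℝ} (hα : α ∈ Ioo (1 / 2 : ℝ) 1) (hK : 0 ≤ K)
    (hh : 0 < h) (hg : ContinuousOn g (Ioi 0))
    (hle : ∀ s > 0, |g s| ≤ K * min (s ^ (α - 1)) (h * s ^ (α - 2))) :
    ∫ s in Ioi 0, |g s| ^ 2 ≤ K ^ 2 * (1 / (2 * α - 1) + 1 / (3 - 2 * α)) * h ^ (2 * α - 1) := by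
  obtain ⟨hα1, hα2⟩ := hα
  have hG : ContinuousOn (fun s => |g s| ^ 2) (Ioi 0) := hg.abs.pow 2
  have hnear : ∀ s ∈ Ioc 0 h, |g s| ^ 2 ≤ K ^ 2 * s ^ (2 * (α - 1)) := fun s hs =>
    sq_abs_le_sq_mul_rpow hs.1.le <|
      (hle s hs.1).trans (mul_le_mul_of_nonneg_left (min_le_left _ _) hK)
  have hfar : ∀ s ∈ Ioi h, |g s| ^ 2 ≤ (K * h) ^ 2 * s ^ (2 * (α - 2)) := fun s hs =>
    sq_abs_le_sq_mul_rpow (hh.trans hs).le <|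
      (hle s (hh.trans hs)).trans <| by
        rw [mul_assoc]; exact mul_le_mul_of_nonneg_left (min_le_right _ _) hK
  have hp_near : -1 < 2 * (α - 1) := by linarith
  have hp_far : 2 * (α - 2) < -1 := by linarith
  rw [← Ioc_union_Ioi_eq_Ioi hh.le, setIntegral_union Ioc_disjoint_Ioi_same measurableSet_Ioi
    (integrableOn_Ioc_zero_of_le_rpow hp_near hh.le (hG.mono Ioc_subset_Ioi_self)
      (fun s _ => by positivity) hnear)
    (integrableOn_Ioi_of_le_rpow hp_far hh (hG.mono fun s hs => hh.trans hs)
      (fun s _ => by positivity) hfar)]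
  have hpow : h ^ 2 * h ^ (-(3 - 2 * α)) = h ^ (2 * α - 1) := by
    rw [← Real.rpow_two, ← Real.rpow_add hh]; ring_nf
  calc (∫ s in Ioc 0 h, |g s| ^ 2) + ∫ s in Ioi h, |g s| ^ 2
      ≤ K ^ 2 * (h ^ (2 * (α - 1) + 1) / (2 * (α - 1) + 1))
        + (K * h) ^ 2 * (-h ^ (2 * (α - 2) + 1) / (2 * (α - 2) + 1)) :=
        add_le_add
          (setIntegral_Ioc_zero_le_of_le_rpow hp_near hh.le (fun s _ => by positivity) hnear)
          (setIntegral_Ioi_le_of_le_rpow hp_far hh (fun s _ => by positivity) hfar)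
    _ = K ^ 2 * (1 / (2 * α - 1) + 1 / (3 - 2 * α)) * h ^ (2 * α - 1) := by
      rw [show 2 * (α - 1) + 1 = 2 * α - 1 by ring, show 2 * (α - 2) + 1 = -(3 - 2 * α) by ring,
        neg_div_neg_eq, mul_pow, mul_assoc (K ^ 2), ← mul_div_assoc (h ^ 2), hpow]
      ring

end SquareIntegrals

theorem stmt_14 (α C : ℝ) (hα : α ∈ Set.Ioo (1/2 : ℝ) 1) (hC : 0 < C)
    (f f' : ℝ → ℝ) (hderiv : ∀ s > (0:ℝ), HasDerivAt f (f' s) s)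
    (hf : ∀ s > (0:ℝ), |f s| ≤ C * s ^ (α - 1))
    (hf' : ∀ s > (0:ℝ), |f' s| ≤ C * s ^ (α - 2)) :
    ∃ C' > (0:ℝ),
      (∀ h > (0:ℝ), (∫ s in (0:ℝ)..h, |f s| ^ 2) ≤ C' * h ^ (2 * α - 1)) ∧
      (∀ h > (0:ℝ), ∀ s > (0:ℝ),
        |f (h + s) - f s| ≤ C' * min (s ^ (α - 1)) (h * s ^ (α - 2))) ∧
      (∀ h > (0:ℝ),
        (∫ s in Set.Ioi (0:ℝ), |f (h + s) - f s| ^ 2) ≤ C' * h ^ (2 * α - 1)) := by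
  set K := 1 / (2 * α - 1) + 1 / (3 - 2 * α)
  have hK1 : 0 < 1 / (2 * α - 1) := one_div_pos.mpr (by linarith [hα.1])
  have hK2 : 0 < 1 / (3 - 2 * α) := one_div_pos.mpr (by linarith [hα.2])
  have hinc : ∀ h > (0:ℝ), ∀ s > (0:ℝ),
      |f (h + s) - f s| ≤ 2 * C * min (s ^ (α - 1)) (h * s ^ (α - 2)) := fun h hh s hs =>
    abs_add_sub_le_two_mul_min hC.le hα.2.le hderiv hf hf' hh.le hs
  have hfc : ContinuousOn f (Ioi 0) := fun s hs => (hderiv s hs).continuousAt.continuousWithinAt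
  have hincc (h : ℝ) (hh : 0 < h) : ContinuousOn (fun s => f (h + s) - f s) (Ioi 0) :=
    (hfc.comp (continuousOn_const.add continuousOn_id) fun s (hs : 0 < s) =>
      show 0 < h + s by linarith).sub hfc
  refine ⟨2 * C + (2 * C) ^ 2 * K, by positivity, fun h hh => ?_, fun h hh s hs => ?_,
    fun h hh => ?_⟩
  · calc (∫ s in (0:ℝ)..h, |f s| ^ 2) ≤ C ^ 2 / (2 * α - 1) * h ^ (2 * α - 1) :=
          integral_sq_abs_le_of_abs_le_rpow hα.1 hh.le hf
      _ ≤ (2 * C + (2 * C) ^ 2 * K) * h ^ (2 * α - 1) := by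
          gcongr
          rw [div_eq_mul_one_div]
          nlinarith
  · refine (hinc h hh s hs).trans (mul_le_mul_of_nonneg_right ?_ (by positivity))
    nlinarith
  · calc (∫ s in Ioi (0:ℝ), |f (h + s) - f s| ^ 2) ≤ (2 * C) ^ 2 * K * h ^ (2 * α - 1) :=
          integral_sq_abs_le_of_abs_le_min hα (by positivity) hh (hincc h hh) (hinc h hh)
      _ ≤ (2 * C + (2 * C) ^ 2 * K) * h ^ (2 * α - 1) := by gcongr; linarith
end
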